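/- Let G be a group and φ : G → G a group endomorphism. Then h_alg(φ) = h_alg^#(φ). In particular, for every finite subset F of G with 1 ∈ F and F = F^{-1}, one has T_n(φ,F)^{-1} = T_n^#(φ,F), hence |T_n(φ,F)| = |T_n^#(φ,F)| for every n ≥ 1, and H_alg(φ,F) = H_alg^#(φ,F). -/
import Mathlib


open scoped Pointwise ENNReal

/-- The `n`-th trajectory of a finite subset `F` under `φ`
(`Tn φ F n = T_{n+1}(φ,F) = F·φ(F)·…·φⁿ(F)`, a pointwise product of finsets). -/
noncomputable def Tn {G : Type*} [Group G] (φ : G → G) (F : Finset G) : ℕ → Finset G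
  | 0 => F
  | n + 1 =>
      letI := Classical.decEq G
      Tn φ F n * F.image φ^[n + 1]

/-- The left `n`-th trajectory `TnSharp φ F n = T^#_{n+1}(φ,F) = φⁿ(F)·…·φ(F)·F`. -/
noncomputable def TnSharp {G : Type*} [Group G] (φ : G → G) (F : Finset G) : ℕ → Finset G
  | 0 => F
  | n + 1 =>
      letI := Classical.decEq G
      F.image φ^[n + 1] * TnSharp φ F n

/-- `H_alg(φ,F) = lim_n (log |T_n(φ,F)|)/n` (the limit exists, and equals the `limsup`). -/
noncomputable def Halg {G : Type*} [Group G] (φ : G → G) (F : Finset G) : ℝ :=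
  Filter.limsup (fun n : ℕ => Real.log (Tn φ F n).card / ((n : ℝ) + 1)) Filter.atTop

/-- `H_alg^#(φ,F) = lim_n (log |T^#_n(φ,F)|)/n`. -/
noncomputable def HalgSharp {G : Type*} [Group G] (φ : G → G) (F : Finset G) : ℝ :=
  Filter.limsup (fun n : ℕ => Real.log (TnSharp φ F n).card / ((n : ℝ) + 1)) Filter.atTop

/-- The algebraic entropy `h_alg(φ) = sup {H_alg(φ,F) : F nonempty finite} ∈ [0,∞]`. -/
noncomputable def halg {G : Type*} [Group G] (φ : G → G) : ℝ≥0∞ :=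
  ⨆ F : Finset G, ⨆ _ : F.Nonempty, ENNReal.ofReal (Halg φ F)

/-- The left algebraic entropy `h_alg^#(φ) = sup {H_alg^#(φ,F) : F nonempty finite}`. -/
noncomputable def halgSharp {G : Type*} [Group G] (φ : G → G) : ℝ≥0∞ :=
  ⨆ F : Finset G, ⨆ _ : F.Nonempty, ENNReal.ofReal (HalgSharp φ F)

open scoped Pointwise ENNReal

section Aux
variable {G : Type*} [Group G] (φ : G → G)

lemma iter_inv (hφ : ∀ x y : G, φ (x * y) = φ x * φ y) (k : ℕ) (x : G) :
    φ^[k] x⁻¹ = (φ^[k] x)⁻¹ := by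
  induction k generalizing x with
  | zero => rfl
  | succ k ih =>
    rw [Function.iterate_succ_apply, Function.iterate_succ_apply]
    have : φ x⁻¹ = (φ x)⁻¹ := (MonoidHom.mk' φ hφ).map_inv x
    rw [this, ih]

lemma Tn_subset {F F' : Finset G} (h : F ⊆ F') : ∀ n, Tn φ F n ⊆ Tn φ F' n := by
  intro n
  induction n with
  | zero => exact h
  | succ n ih =>
    letI := Classical.decEq G
    exact Finset.mul_subset_mul ih (Finset.image_subset_image h)

lemma TnSharp_subset {F F' : Finset G} (h : F ⊆ F') : ∀ n, TnSharp φ F n ⊆ TnSharp φ F' n := by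
  intro n
  induction n with
  | zero => exact h
  | succ n ih =>
    letI := Classical.decEq G
    exact Finset.mul_subset_mul (Finset.image_subset_image h) ih

lemma Tn_nonempty {F : Finset G} (h : F.Nonempty) : ∀ n, (Tn φ F n).Nonempty := by
  intro n
  induction n with
  | zero => exact h
  | succ n ih =>
    letI := Classical.decEq G
    exact ih.mul (h.image _)

lemma TnSharp_nonempty {F : Finset G} (h : F.Nonempty) : ∀ n, (TnSharp φ F n).Nonempty := by
  intro n
  induction n with
  | zero => exact h
  | succ n ih =>
    letI := Classical.decEq G
    exact (h.image _).mul ih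

lemma Tn_card_le (F : Finset G) : ∀ n, (Tn φ F n).card ≤ F.card ^ (n + 1) := by
  intro n
  induction n with
  | zero => simp [Tn]
  | succ n ih =>
    letI := Classical.decEq G
    calc (Tn φ F (n+1)).card ≤ (Tn φ F n).card * (F.image φ^[n+1]).card :=
          Finset.card_mul_le
      _ ≤ F.card ^ (n+1) * F.card :=
          Nat.mul_le_mul ih Finset.card_image_le
      _ = F.card ^ (n + 1 + 1) := (pow_succ _ _).symm

lemma TnSharp_card_le (F : Finset G) : ∀ n, (TnSharp φ F n).card ≤ F.card ^ (n + 1) := by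
  intro n
  induction n with
  | zero => simp [TnSharp]
  | succ n ih =>
    letI := Classical.decEq G
    calc (TnSharp φ F (n+1)).card ≤ (F.image φ^[n+1]).card * (TnSharp φ F n).card :=
          Finset.card_mul_le
      _ ≤ F.card * F.card ^ (n+1) :=
          Nat.mul_le_mul Finset.card_image_le ih
      _ = F.card ^ (n + 1 + 1) := by ring

end Aux

section Aux2
variable {G : Type*} [Group G] (φ : G → G)

lemma Tn_inv_coe (hφ : ∀ x y : G, φ (x * y) = φ x * φ y) {F : Finset G}
    (hsym : ((F : Set G))⁻¹ = (F : Set G)) :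
    ∀ n, ((Tn φ F n : Set G))⁻¹ = (TnSharp φ F n : Set G) := by
  have hmem : ∀ x : G, x ∈ F → x⁻¹ ∈ (F : Set G) := by
    intro x hx
    rw [← hsym]; simpa [Set.mem_inv] using hx
  have himg : ∀ k : ℕ,
      letI := Classical.decEq G
      ((F.image φ^[k] : Finset G) : Set G)⁻¹ = ((F.image φ^[k] : Finset G) : Set G) := by
    intro k
    letI := Classical.decEq G
    rw [Finset.coe_image]
    ext y
    simp only [Set.mem_inv, Set.mem_image, Finset.mem_coe]
    constructor
    · rintro ⟨x, hx, hxy⟩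
      exact ⟨x⁻¹, hmem x hx, by rw [iter_inv φ hφ, hxy, inv_inv]⟩
    · rintro ⟨x, hx, rfl⟩
      exact ⟨x⁻¹, hmem x hx, by rw [iter_inv φ hφ]⟩
  intro n
  induction n with
  | zero => exact hsym
  | succ n ih =>
    letI := Classical.decEq G
    have h1 : (Tn φ F (n+1) : Set G)
        = (Tn φ F n : Set G) * ((F.image φ^[n+1] : Finset G) : Set G) := by
      simp [Tn, Finset.coe_mul]
    have h2 : (TnSharp φ F (n+1) : Set G)
        = ((F.image φ^[n+1] : Finset G) : Set G) * (TnSharp φ F n : Set G) := by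
      simp [TnSharp, Finset.coe_mul]
    rw [h1, mul_inv_rev, ih, himg, h2]

lemma Tn_card_eq (hφ : ∀ x y : G, φ (x * y) = φ x * φ y) {F : Finset G}
    (hsym : ((F : Set G))⁻¹ = (F : Set G)) (n : ℕ) :
    (Tn φ F n).card = (TnSharp φ F n).card := by
  letI := Classical.decEq G
  have h : (Tn φ F n)⁻¹ = TnSharp φ F n := by
    apply Finset.coe_injective
    rw [Finset.coe_inv]
    exact Tn_inv_coe φ hφ hsym n
  rw [← h, Finset.card_inv]

lemma Halg_eq_of_sym (hφ : ∀ x y : G, φ (x * y) = φ x * φ y) {F : Finset G}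
    (hsym : ((F : Set G))⁻¹ = (F : Set G)) : Halg φ F = HalgSharp φ F := by
  unfold Halg HalgSharp
  congr 1
  funext n
  rw [Tn_card_eq φ hφ hsym n]

end Aux2

section Aux3
variable {G : Type*} [Group G] (φ : G → G)

lemma limsup_mono_aux {A B : ℕ → Finset G} {F' : Finset G}
    (hA : ∀ n, (A n).Nonempty) (hAB : ∀ n, A n ⊆ B n)
    (hBle : ∀ n, (B n).card ≤ F'.card ^ (n + 1)) :
    Filter.limsup (fun n : ℕ => Real.log (A n).card / ((n : ℝ) + 1)) Filter.atTop
      ≤ Filter.limsup (fun n : ℕ => Real.log (B n).card / ((n : ℝ) + 1)) Filter.atTop := by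
  have hBpos : ∀ n, (0 : ℝ) < (B n).card := by
    intro n
    exact_mod_cast ((hA n).mono (hAB n)).card_pos
  refine Filter.limsup_le_limsup (Filter.Eventually.of_forall fun n => ?_) ?_ ?_
  · have hp : (0 : ℝ) < (n : ℝ) + 1 := by positivity
    have hcard : ((A n).card : ℝ) ≤ (B n).card := by
      exact_mod_cast Finset.card_le_card (hAB n)
    have hApos : (0 : ℝ) < (A n).card := by exact_mod_cast (hA n).card_pos
    exact (div_le_div_iff_of_pos_right hp).mpr (Real.log_le_log hApos hcard)
  · refine Filter.isCoboundedUnder_le_of_le Filter.atTop (x := 0) fun n => ?_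
    apply div_nonneg _ (by positivity)
    apply Real.log_nonneg
    exact_mod_cast (hA n).card_pos
  · refine Filter.isBoundedUnder_of ⟨Real.log F'.card, fun n => ?_⟩
    have hp : (0 : ℝ) < (n : ℝ) + 1 := by positivity
    rw [div_le_iff₀ hp]
    calc Real.log (B n).card ≤ Real.log ((F'.card : ℝ) ^ (n + 1)) := by
          apply Real.log_le_log (hBpos n)
          exact_mod_cast hBle n
      _ = Real.log F'.card * ((n : ℝ) + 1) := by
          rw [Real.log_pow]; push_cast; ring

lemma Halg_mono {F F' : Finset G} (hF : F.Nonempty) (h : F ⊆ F') :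
    Halg φ F ≤ Halg φ F' :=
  limsup_mono_aux (Tn_nonempty φ hF) (Tn_subset φ h) (Tn_card_le φ F')

lemma HalgSharp_mono {F F' : Finset G} (hF : F.Nonempty) (h : F ⊆ F') :
    HalgSharp φ F ≤ HalgSharp φ F' :=
  limsup_mono_aux (TnSharp_nonempty φ hF) (TnSharp_subset φ h) (TnSharp_card_le φ F')

end Aux3

/-- For a group `G` and a group endomorphism `φ : G → G`,
`h_alg(φ) = h_alg^#(φ)`. In particular, for every finite `F ⊆ G` with `1 ∈ F` and
`F = F⁻¹` one has `T_n(φ,F)⁻¹ = T_n^#(φ,F)`, hence `|T_n(φ,F)| = |T_n^#(φ,F)|` for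
every `n ≥ 1`, and `H_alg(φ,F) = H_alg^#(φ,F)`. -/
theorem statement_12 {G : Type*} [Group G] (φ : G → G)
    (hφ : ∀ x y : G, φ (x * y) = φ x * φ y) :
    halg φ = halgSharp φ
    ∧ ∀ F : Finset G, F.Nonempty → (1 : G) ∈ F → ((F : Set G)⁻¹ = (F : Set G)) →
        (∀ n : ℕ, ((Tn φ F n : Set G))⁻¹ = (TnSharp φ F n : Set G)
          ∧ (Tn φ F n).card = (TnSharp φ F n).card)
        ∧ Halg φ F = HalgSharp φ F := by
  classical
  have key : ∀ F : Finset G, F.Nonempty →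
      ∃ F' : Finset G, F'.Nonempty ∧ F ⊆ F' ∧ ((F' : Set G))⁻¹ = (F' : Set G) := by
    intro F hF
    refine ⟨insert 1 (F ∪ F⁻¹), Finset.insert_nonempty _ _,
      fun x hx => Finset.mem_insert_of_mem (Finset.mem_union_left _ hx), ?_⟩
    push_cast
    ext x
    simp only [Set.mem_inv, Set.mem_insert_iff, Set.mem_union, Set.mem_inv, inv_eq_one,
      Finset.mem_coe, inv_inv]
    tauto
  constructor
  · apply le_antisymm
    · refine iSup₂_le fun F hF => ?_
      obtain ⟨F', hF', hsub, hsym⟩ := key F hF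
      calc ENNReal.ofReal (Halg φ F) ≤ ENNReal.ofReal (Halg φ F') :=
            ENNReal.ofReal_le_ofReal (Halg_mono φ hF hsub)
        _ = ENNReal.ofReal (HalgSharp φ F') := by rw [Halg_eq_of_sym φ hφ hsym]
        _ ≤ halgSharp φ := le_iSup₂ (f := fun F'' _ => ENNReal.ofReal (HalgSharp φ F'')) F' hF'
    · refine iSup₂_le fun F hF => ?_
      obtain ⟨F', hF', hsub, hsym⟩ := key F hF
      calc ENNReal.ofReal (HalgSharp φ F) ≤ ENNReal.ofReal (HalgSharp φ F') :=
            ENNReal.ofReal_le_ofReal (HalgSharp_mono φ hF hsub)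
        _ = ENNReal.ofReal (Halg φ F') := by rw [Halg_eq_of_sym φ hφ hsym]
        _ ≤ halg φ := le_iSup₂ (f := fun F'' _ => ENNReal.ofReal (Halg φ F'')) F' hF'
  · intro F hF h1 hsym
    exact ⟨fun n => ⟨Tn_inv_coe φ hφ hsym n, Tn_card_eq φ hφ hsym n⟩,
      Halg_eq_of_sym φ hφ hsym⟩
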